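/- arXiv:2306.04648 — 3 statements merged into one kernel-verified Lean document; each statement's English description precedes it below -/
import Mathlib

section
/- Let Z_1,...,Z_N,Z_{N+1} be i.i.d. real-valued random variables that are almost surely pairwise distinct, and for m ∈ {1,...,N} let Z_{(m)} denote the m-th smallest value among Z_1,...,Z_N. Then Prob( Z_{N+1} ≤ Z_{(m)} ) = m/(N+1). -/
open MeasureTheory ProbabilityTheory Finset

/-- The `m`-th smallest value (1-indexed) of the family `v : Fin N → ℝ`,
i.e. its `m`-th order statistic. -/
noncomputable def orderStat {N : ℕ} (v : Fin N → ℝ) (m : ℕ) : ℝ :=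
  ((List.ofFn v).mergeSort (· ≤ ·)).getD (m - 1) 0

lemma list_le_getD_iff (x : ℝ) : ∀ (l : List ℝ), l.Pairwise (· < ·) → (∀ a ∈ l, a ≠ x) →
    ∀ k, k < l.length → (x ≤ l.getD k 0 ↔ l.countP (fun a => decide (a < x)) ≤ k) := by
  intro l
  induction l with
  | nil => intro _ _ k hk; simp at hk
  | cons a t ih =>
    intro hs hne k hk
    rcases lt_or_gt_of_ne (hne a List.mem_cons_self) with hax | hxa
    · have hcount : (a :: t).countP (fun b => decide (b < x)) =
          t.countP (fun b => decide (b < x)) + 1 := by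
        rw [List.countP_cons]
        simp [hax]
      cases k with
      | zero =>
        simp only [List.getD_cons_zero, hcount]
        constructor
        · intro h; exact absurd h (not_le.mpr hax)
        · intro h; omega
      | succ j =>
        simp only [List.getD_cons_succ, hcount]
        rw [ih hs.of_cons (fun b hb => hne b (List.mem_cons_of_mem a hb)) j
          (by simpa using hk)]
        omega
    · have hall : ∀ b ∈ a :: t, x < b := by
        intro b hb
        rcases List.mem_cons.mp hb with rfl | hb
        · exact hxa
        · exact hxa.trans (List.rel_of_pairwise_cons hs hb)
      have hcount : (a :: t).countP (fun b => decide (b < x)) = 0 := by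
        rw [List.countP_eq_zero]
        intro b hb
        simpa using not_lt.mpr (hall b hb).le
      have hget : x ≤ (a :: t).getD k 0 := by
        rw [List.getD_eq_getElem _ _ hk]
        exact (hall _ (List.getElem_mem hk)).le
      simp only [hcount, Nat.zero_le, iff_true]
      exact hget

lemma countP_ofFn {N : ℕ} (v : Fin N → ℝ) (p : ℝ → Prop) [DecidablePred p] :
    (List.ofFn v).countP (fun a => decide (p a)) = (univ.filter (fun j => p (v j))).card := by
  have huniv : (Finset.univ : Finset (Fin N)).val = ↑(List.finRange N) := rfl
  rw [Finset.card_def, Finset.filter_val, huniv, ← Multiset.countP_eq_card_filter,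
    Multiset.coe_countP, List.ofFn_eq_map, List.countP_map]
  rfl

lemma orderStat_le_iff {N : ℕ} {v : Fin N → ℝ} (hv : Function.Injective v) {x : ℝ}
    (hx : ∀ j, v j ≠ x) {m : ℕ} (hm1 : 1 ≤ m) (hmN : m ≤ N) :
    x ≤ orderStat v m ↔ (univ.filter (fun j => v j < x)).card ≤ m - 1 := by
  set l := (List.ofFn v).mergeSort (· ≤ ·) with hl
  have hperm : List.Perm l (List.ofFn v) := List.mergeSort_perm _ _
  have hsorted : l.Pairwise (· ≤ ·) := List.pairwise_mergeSort' (· ≤ ·) _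
  have hnodup : l.Nodup := hperm.nodup_iff.mpr (List.nodup_ofFn.mpr hv)
  have hslt : l.Pairwise (· < ·) := (hsorted.sortedLE.sortedLT_of_nodup hnodup).pairwise
  have hlen : l.length = N := by rw [hperm.length_eq, List.length_ofFn]
  have hne : ∀ a ∈ l, a ≠ x := by
    intro a ha
    rw [hperm.mem_iff, List.mem_ofFn] at ha
    obtain ⟨j, rfl⟩ := ha
    exact hx j
  have hk : m - 1 < l.length := by omega
  rw [orderStat, ← hl, list_le_getD_iff x l hslt hne _ hk, hperm.countP_eq,
    countP_ofFn v (fun a => a < x)]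

/-- The (1-indexed) rank of coordinate `i` in the vector `w`. -/
noncomputable def rankF {n : ℕ} (w : Fin n → ℝ) (i : Fin n) : ℕ :=
  (univ.filter (fun j => w j ≤ w i)).card

lemma rankF_lt_rankF {n : ℕ} {w : Fin n → ℝ} {i j : Fin n} (h : w i < w j) :
    rankF w i < rankF w j := by
  apply Finset.card_lt_card
  constructor
  · intro a ha
    simp only [mem_filter, mem_univ, true_and] at ha ⊢
    exact ha.trans h.le
  · intro hsub
    have : j ∈ univ.filter (fun a => w a ≤ w j) := by simp
    have := hsub this
    simp only [mem_filter, mem_univ, true_and] at this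
    exact absurd this (not_le.mpr h)

lemma rankF_injective {n : ℕ} {w : Fin n → ℝ} (hw : Function.Injective w) :
    Function.Injective (rankF w) := by
  intro i j hij
  by_contra hne
  rcases lt_or_gt_of_ne (fun h => hne (hw h)) with h | h
  · exact absurd hij (Nat.ne_of_lt (rankF_lt_rankF h))
  · exact absurd hij.symm (Nat.ne_of_lt (rankF_lt_rankF h))

lemma rankF_mem_Icc {n : ℕ} (w : Fin n → ℝ) (i : Fin n) :
    rankF w i ∈ Finset.Icc 1 n := by
  rw [Finset.mem_Icc]
  refine ⟨Finset.card_pos.mpr ⟨i, by simp⟩, ?_⟩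
  have := Finset.card_filter_le (univ : Finset (Fin n)) (fun j => w j ≤ w i)
  simpa [rankF] using this

lemma rankF_surj {n : ℕ} {w : Fin n → ℝ} (hw : Function.Injective w) {k : ℕ}
    (hk : k ∈ Finset.Icc 1 n) : ∃ i, rankF w i = k := by
  have himg : univ.image (rankF w) = Finset.Icc 1 n := by
    apply Finset.eq_of_subset_of_card_le
    · intro a ha
      simp only [mem_image, mem_univ, true_and] at ha
      obtain ⟨i, rfl⟩ := ha
      exact rankF_mem_Icc w i
    · rw [Nat.card_Icc, Finset.card_image_of_injective _ (rankF_injective hw)]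
      simp
  rw [← himg, mem_image] at hk
  obtain ⟨i, _, hi⟩ := hk
  exact ⟨i, hi⟩

lemma rankF_comp_perm {n : ℕ} (w : Fin n → ℝ) (σ : Equiv.Perm (Fin n)) (i : Fin n) :
    rankF (w ∘ σ) i = rankF w (σ i) := by
  unfold rankF
  apply Finset.card_nbij' σ σ.symm <;> intro a ha <;> simp_all

lemma rankF_last {N : ℕ} {w : Fin (N + 1) → ℝ} (hw : Function.Injective w) :
    rankF w (Fin.last N) =
      (univ.filter (fun j : Fin N => w j.castSucc < w (Fin.last N))).card + 1 := by
  unfold rankF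
  rw [Fin.univ_castSuccEmb, Finset.filter_cons, if_pos le_rfl, Finset.card_cons,
    Finset.filter_map, Finset.card_map]
  congr 1
  apply congrArg
  apply Finset.filter_congr
  intro j _
  simp only [Function.comp, Fin.castSuccEmb, Fin.castAddEmb, Fin.castLEEmb,
    Function.Embedding.coeFn_mk]
  constructor
  · intro h
    exact lt_of_le_of_ne h (fun he => absurd (hw he) (Fin.castSucc_lt_last j).ne)
  · exact le_of_lt

lemma measurable_rankF {n : ℕ} (i : Fin n) :
    Measurable (fun w : Fin n → ℝ => rankF w i) := by
  have : (fun w : Fin n → ℝ => rankF w i) =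
      fun w => ∑ j : Fin n, if w j ≤ w i then 1 else 0 := by
    funext w
    rw [rankF, Finset.card_filter]
  rw [this]
  apply Finset.measurable_sum
  intro j _
  exact Measurable.ite (measurableSet_le (measurable_pi_apply j) (measurable_pi_apply i))
    measurable_const measurable_const

lemma measurableSet_injective {n : ℕ} :
    MeasurableSet {w : Fin n → ℝ | Function.Injective w} := by
  have : {w : Fin n → ℝ | Function.Injective w} =
      ⋂ (i) (j) (_ : i ≠ j), {w | w i ≠ w j} := by
    ext w
    simp only [Set.mem_setOf_eq, Set.mem_iInter]
    constructor
    · intro hw i j hij he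
      exact hij (hw he)
    · intro h i j he
      by_contra hij
      exact h i j hij he
  rw [this]
  refine MeasurableSet.iInter fun i => MeasurableSet.iInter fun j =>
    MeasurableSet.iInter fun _ => ?_
  exact (measurableSet_eq_fun (measurable_pi_apply i) (measurable_pi_apply j)).compl

/-- Let `Z 0, ..., Z N` be i.i.d. real random variables, almost surely pairwise
distinct.  For `m ∈ {1, ..., N}`, the probability that `Z N` (the last one) is at most
the `m`-th smallest value among `Z 0, ..., Z (N-1)` equals `m / (N + 1)`. -/
theorem prob_le_orderStat_of_iid
    {Ω : Type*} [MeasureSpace Ω] [IsProbabilityMeasure (ℙ : Measure Ω)]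
    {N : ℕ} (Z : Fin (N + 1) → Ω → ℝ)
    (hmeas : ∀ n, Measurable (Z n))
    (hindep : iIndepFun Z ℙ)
    (hident : ∀ n n', IdentDistrib (Z n) (Z n') ℙ ℙ)
    (hdistinct : ∀ᵐ ω ∂(ℙ : Measure Ω), Function.Injective (fun n => Z n ω))
    (m : ℕ) (hm1 : 1 ≤ m) (hmN : m ≤ N) :
    ℙ {ω | Z (Fin.last N) ω ≤ orderStat (fun n : Fin N => Z n.castSucc ω) m}
      = (m : ENNReal) / (N + 1) := by
  classical
  set μ : Measure ℝ := Measure.map (Z 0) ℙ with hμ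
  have hμprob : IsProbabilityMeasure μ := Measure.isProbabilityMeasure_map (hmeas 0).aemeasurable
  have hμi : ∀ (i : Fin (N + 1)) (t : Set ℝ), MeasurableSet t → ℙ (Z i ⁻¹' t) = μ t := by
    intro i t ht
    rw [hμ, ← (hident i 0).map_eq, Measure.map_apply (hmeas i) ht]
  set ν : Measure (Fin (N + 1) → ℝ) := Measure.pi (fun _ => μ) with hν
  have hνprob : IsProbabilityMeasure ν := by rw [hν]; infer_instance
  -- the joint law of any permuted family is ν
  have hlaw : ∀ σ : Equiv.Perm (Fin (N + 1)),
      Measure.map (fun ω (i : Fin (N + 1)) => Z (σ i) ω) ℙ = ν := by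
    intro σ
    have hmσ : Measurable (fun ω (i : Fin (N + 1)) => Z (σ i) ω) :=
      measurable_pi_lambda _ (fun i => hmeas (σ i))
    rw [hν]
    refine (Measure.pi_eq ?_).symm
    intro s hs
    rw [Measure.map_apply hmσ (MeasurableSet.univ_pi hs)]
    have h1 : (fun ω (i : Fin (N + 1)) => Z (σ i) ω) ⁻¹' (Set.univ.pi s)
        = ⋂ i, Z (σ i) ⁻¹' (s i) := by
      ext ω
      simp [Set.mem_pi]
    have h2 : (⋂ i, Z (σ i) ⁻¹' (s i)) = ⋂ j, Z j ⁻¹' (s (σ.symm j)) := by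
      ext ω
      simp only [Set.mem_iInter, Set.mem_preimage]
      constructor
      · intro h j
        simpa using h (σ.symm j)
      · intro h i
        have := h (σ i)
        rwa [Equiv.symm_apply_apply] at this
    rw [h1, h2]
    have h3 : (⋂ j, Z j ⁻¹' (s (σ.symm j))) = ⋂ j ∈ Finset.univ, Z j ⁻¹' (s (σ.symm j)) := by
      simp
    rw [h3, hindep.measure_inter_preimage_eq_mul Finset.univ
      (fun j hj => hs (σ.symm j))]
    calc ∏ j : Fin (N + 1), ℙ (Z j ⁻¹' s (σ.symm j))
        = ∏ j : Fin (N + 1), μ (s (σ.symm j)) := by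
          exact Finset.prod_congr rfl fun j _ => hμi j _ (hs (σ.symm j))
      _ = ∏ i : Fin (N + 1), μ (s i) := Equiv.prod_comp σ.symm (fun j => μ (s j))
  set W : Ω → (Fin (N + 1) → ℝ) := fun ω i => Z i ω with hW
  have hWmeas : Measurable W := measurable_pi_lambda _ (fun i => hmeas i)
  have hWlaw : Measure.map W ℙ = ν := hlaw 1
  -- rank-level sets
  set A : ℕ → Set (Fin (N + 1) → ℝ) := fun k => {w | rankF w (Fin.last N) = k} with hA
  have hAmeas : ∀ k, MeasurableSet (A k) := fun k =>
    measurable_rankF (Fin.last N) (MeasurableSet.singleton k)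
  have hAimeas : ∀ (i : Fin (N + 1)) (k : ℕ), MeasurableSet {w : Fin (N+1) → ℝ | rankF w i = k} :=
    fun i k => measurable_rankF i (MeasurableSet.singleton k)
  set I : Set (Fin (N + 1) → ℝ) := {w | Function.Injective w} with hIdef
  have hImeas : MeasurableSet I := measurableSet_injective
  have hI0 : ν Iᶜ = 0 := by
    rw [← hWlaw, Measure.map_apply hWmeas hImeas.compl]
    rw [ae_iff] at hdistinct
    exact hdistinct
  have hI1 : ν I = 1 := by
    have := measure_add_measure_compl (μ := ν) hImeas
    rw [hI0, add_zero, measure_univ] at this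
    exact this
  -- each rank value in 1..N+1 has the same probability for each coordinate
  have hsame : ∀ (k : ℕ) (i : Fin (N + 1)),
      ν {w | rankF w i = k} = ν (A k) := by
    intro k i
    set σ : Equiv.Perm (Fin (N + 1)) := Equiv.swap i (Fin.last N) with hσ
    have hmσ : Measurable (fun ω (j : Fin (N + 1)) => Z (σ j) ω) :=
      measurable_pi_lambda _ (fun j => hmeas (σ j))
    have := hlaw σ
    have hpre : (fun ω (j : Fin (N + 1)) => Z (σ j) ω) ⁻¹' (A k)
        = W ⁻¹' {w | rankF w i = k} := by
      ext ω
      simp only [Set.mem_preimage, hA, Set.mem_setOf_eq]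
      have : (fun j => Z (σ j) ω) = (W ω) ∘ σ := rfl
      rw [this, rankF_comp_perm (W ω) σ (Fin.last N), hσ, Equiv.swap_apply_right]
    symm
    calc ν (A k) = Measure.map (fun ω (j : Fin (N + 1)) => Z (σ j) ω) ℙ (A k) := by rw [this]
      _ = ℙ ((fun ω (j : Fin (N + 1)) => Z (σ j) ω) ⁻¹' (A k)) :=
          Measure.map_apply hmσ (hAmeas k)
      _ = ℙ (W ⁻¹' {w | rankF w i = k}) := by rw [hpre]
      _ = ν {w | rankF w i = k} := by
          rw [← hWlaw, Measure.map_apply hWmeas (hAimeas i k)]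
  -- partition argument: ν (A k) = 1/(N+1) for k in 1..N+1
  have hAk : ∀ k ∈ Finset.Icc 1 (N + 1), ν (A k) = (((N : ENNReal)) + 1)⁻¹ := by
    intro k hk
    set B : Fin (N + 1) → Set (Fin (N + 1) → ℝ) :=
      fun i => {w | rankF w i = k} ∩ I with hB
    have hBmeas : ∀ i, MeasurableSet (B i) := fun i => (hAimeas i k).inter hImeas
    have hBdisj : Pairwise (Function.onFun Disjoint B) := by
      intro i j hij
      rw [Function.onFun, Set.disjoint_left]
      rintro w ⟨hwi, hwI⟩ ⟨hwj, _⟩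
      exact hij (rankF_injective hwI (hwi.trans hwj.symm))
    have hBunion : (⋃ i, B i) = I := by
      apply Set.Subset.antisymm
      · exact Set.iUnion_subset fun i => Set.inter_subset_right
      · intro w hw
        obtain ⟨i, hi⟩ := rankF_surj hw hk
        exact Set.mem_iUnion.mpr ⟨i, hi, hw⟩
    have hBi : ∀ i, ν (B i) = ν (A k) := by
      intro i
      rw [hB]
      simp only
      rw [measure_inter_conull hI0]
      exact hsame k i
    have hsum : ∑ i : Fin (N + 1), ν (B i) = 1 := by
      rw [← tsum_fintype (L := SummationFilter.unconditional _), ← measure_iUnion hBdisj hBmeas, hBunion, hI1]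
    rw [Finset.sum_congr rfl (fun i _ => hBi i), Finset.sum_const, Finset.card_univ,
      Fintype.card_fin, nsmul_eq_mul] at hsum
    have hne : ((N : ENNReal) + 1) ≠ 0 := by
      simp
    have hnetop : ((N : ENNReal) + 1) ≠ ⊤ := by
      simp [ENNReal.add_ne_top]
    have hcast : ((N + 1 : ℕ) : ENNReal) = (N : ENNReal) + 1 := by push_cast; ring
    rw [hcast] at hsum
    rw [← ENNReal.eq_div_iff hne hnetop] at hsum
    rw [hsum, ENNReal.div_eq_inv_mul, mul_one]
  -- the target event, rewritten via ranks
  set U : Set (Fin (N + 1) → ℝ) := {w | rankF w (Fin.last N) ≤ m} with hU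
  have hUmeas : MeasurableSet U := measurable_rankF (Fin.last N)
    (MeasurableSet.of_discrete : MeasurableSet {j : ℕ | j ≤ m})
  -- a.e. rewrite of the event via ranks
  have hae : {ω | Z (Fin.last N) ω ≤ orderStat (fun n : Fin N => Z n.castSucc ω) m}
      =ᵐ[(ℙ : Measure Ω)] W ⁻¹' U := by
    rw [Filter.eventuallyEq_set]
    filter_upwards [hdistinct] with ω hω
    have hwin : Function.Injective (W ω) := hω
    have hv : Function.Injective (fun j : Fin N => Z j.castSucc ω) := by
      intro a b hab
      exact Fin.castSucc_injective N (hω hab)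
    have hx : ∀ j : Fin N, Z j.castSucc ω ≠ Z (Fin.last N) ω := by
      intro j he
      exact absurd (hω he) (Fin.castSucc_lt_last j).ne
    simp only [Set.mem_setOf_eq, Set.mem_preimage, hU]
    rw [orderStat_le_iff hv hx hm1 hmN, rankF_last hwin]
    have : (univ.filter (fun j : Fin N => (W ω) j.castSucc < (W ω) (Fin.last N))).card
        = (univ.filter (fun j : Fin N => Z j.castSucc ω < Z (Fin.last N) ω)).card := rfl
    rw [this]
    omega
  have hmain : ℙ (W ⁻¹' U) = ν U := by
    rw [← hWlaw, Measure.map_apply hWmeas hUmeas]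
  have hUeq : U = ⋃ k ∈ Finset.Icc 1 m, A k := by
    ext w
    simp only [hU, Set.mem_setOf_eq, Set.mem_iUnion, hA, Finset.mem_Icc]
    constructor
    · intro h
      exact ⟨rankF w (Fin.last N),
        ⟨(Finset.mem_Icc.mp (rankF_mem_Icc w (Fin.last N))).1, h⟩, rfl⟩
    · rintro ⟨k, ⟨hk1, hk2⟩, hk3⟩
      rw [hk3]
      exact hk2
  have hdisj : (↑(Finset.Icc 1 m : Finset ℕ) : Set ℕ).PairwiseDisjoint A := by
    intro k _ k' _ hkk'
    rw [Function.onFun, Set.disjoint_left]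
    intro w hw hw'
    simp only [hA, Set.mem_setOf_eq] at hw hw'
    exact hkk' (hw.symm.trans hw')
  have hνU : ν U = ∑ k ∈ Finset.Icc 1 m, ν (A k) := by
    rw [hUeq]
    exact measure_biUnion_finset hdisj (fun k _ => hAmeas k)
  have hfinal : ν U = (m : ENNReal) * ((N : ENNReal) + 1)⁻¹ := by
    rw [hνU, Finset.sum_congr rfl (fun k hk => hAk k ?_), Finset.sum_const, Nat.card_Icc,
      nsmul_eq_mul]
    · norm_num
    · rw [Finset.mem_Icc] at hk ⊢
      omega
  rw [measure_congr hae, hmain, hfinal, ENNReal.div_eq_inv_mul, mul_comm]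
end

section
/- Let (X_1,Y_1),...,(X_N,Y_N),(X_{test},Y_{test}) be i.i.d. random pairs with values in ℝ^d × ℝ, let f : ℝ^d → ℝ be a (measurable) point-prediction function, and let A_n = (f(X_n) − Y_n)² for n = 1,...,N and A_{test} = (f(X_{test}) − Y_{test})². Assume A_1,...,A_N,A_{test} are almost surely pairwise distinct. Fix α ∈ [1/(N+1), 1], let q̂ be the ⌈(N+1)(1−α)⌉-th smallest value among A_1,...,A_N, and let C = {y ∈ ℝ : (f(X_{test}) − y)² ≤ q̂} = [f(X_{test}) − √q̂, f(X_{test}) + √q̂]. Then Prob( Y_{test} ∈ C ) ≥ 1 − α. -/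
open MeasureTheory ProbabilityTheory

open scoped ENNReal

/-- rank -/
noncomputable def rk {M : ℕ} (v : Fin M → ℝ) (i : Fin M) : ℕ :=
  (Finset.univ.filter (fun j => v j ≤ v i)).card

lemma rk_lt {M : ℕ} {v : Fin M → ℝ} (hv : Function.Injective v) {i j : Fin M}
    (h : v i < v j) : rk v i < rk v j := by
  apply Finset.card_lt_card
  constructor
  · intro a ha
    simp only [Finset.mem_filter] at ha ⊢
    exact ⟨ha.1, ha.2.trans h.le⟩
  · intro hsub
    have := hsub (by simp : j ∈ Finset.univ.filter (fun a => v a ≤ v j))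
    simp only [Finset.mem_filter] at this
    exact absurd this.2 (not_le.mpr h)

lemma rk_injective {M : ℕ} {v : Fin M → ℝ} (hv : Function.Injective v) :
    Function.Injective (rk v) := by
  intro i j hij
  by_contra hne
  rcases lt_or_gt_of_ne (fun h : v i = v j => hne (hv h)) with h | h
  · exact absurd hij (rk_lt hv h).ne
  · exact absurd hij.symm (rk_lt hv h).ne

lemma rk_mem_Icc {M : ℕ} (v : Fin M → ℝ) (i : Fin M) : rk v i ∈ Finset.Icc 1 M := by
  simp only [Finset.mem_Icc]
  constructor
  · refine Finset.card_pos.mpr ⟨i, ?_⟩; simp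
  · exact (Finset.card_filter_le _ _).trans (by simp)

lemma rk_image {M : ℕ} {v : Fin M → ℝ} (hv : Function.Injective v) :
    Finset.univ.image (rk v) = Finset.Icc 1 M := by
  apply Finset.eq_of_subset_of_card_le
  · intro x hx
    simp only [Finset.mem_image] at hx
    obtain ⟨i, _, rfl⟩ := hx
    exact rk_mem_Icc v i
  · rw [Finset.card_image_of_injective _ (rk_injective hv)]
    simp [Nat.card_Icc]

lemma rk_count {M : ℕ} {v : Fin M → ℝ} (hv : Function.Injective v) {k : ℕ} (hk : k ≤ M) :
    (Finset.univ.filter (fun i => rk v i ≤ k)).card = k := by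
  have h1 : (Finset.univ.filter (fun i => rk v i ≤ k)).card
      = ((Finset.univ.image (rk v)).filter (fun n => n ≤ k)).card := by
    rw [Finset.filter_image]
    rw [Finset.card_image_of_injective _ (rk_injective hv)]
  rw [h1, rk_image hv]
  have : (Finset.Icc 1 M).filter (fun n => n ≤ k) = Finset.Icc 1 k := by
    ext n; simp only [Finset.mem_filter, Finset.mem_Icc]
    omega
  rw [this, Nat.card_Icc]; omega

lemma count_le_getElem_of_sorted {s : List ℝ} (hs : s.Pairwise (· < ·)) {m : ℕ}
    (hm : m < s.length) :
    s.countP (fun x => decide (x ≤ s[m])) = m + 1 := by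
  have hps := List.pairwise_iff_getElem.mp hs
  obtain ⟨c, hc⟩ : ∃ c, s[m] = c := ⟨_, rfl⟩
  rw [hc]
  nth_rewrite 1 [← List.take_append_drop (m+1) s]
  rw [List.countP_append]
  have h1 : (s.take (m+1)).countP (fun x => decide (x ≤ c)) = m + 1 := by
    have hall : ∀ a ∈ s.take (m+1), (fun x => decide (x ≤ c)) a = true := by
      intro a ha
      obtain ⟨i, hi, rfl⟩ := List.mem_take_iff_getElem.mp ha
      simp only [decide_eq_true_eq]
      have him : i ≤ m := by omega
      rcases eq_or_lt_of_le him with h | h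
      · subst h; exact hc.le
      · rw [← hc]; exact (hps i m (by omega) hm h).le
    rw [List.countP_eq_length.mpr hall, List.length_take]; omega
  have h2 : (s.drop (m+1)).countP (fun x => decide (x ≤ c)) = 0 := by
    rw [List.countP_eq_zero]
    intro a ha
    obtain ⟨i, hi, rfl⟩ := List.getElem_of_mem ha
    simp only [decide_eq_true_eq, not_le, List.getElem_drop, ← hc]
    exact hps m (m+1+i) hm (by simp at hi; omega) (by omega)
  omega

lemma card_filter_le_eq_countP {N : ℕ} (u : Fin N → ℝ) (c : ℝ) :
    (Finset.univ.filter fun j => u j ≤ c).card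
      = (List.ofFn u).countP (fun x => decide (x ≤ c)) := by
  rw [List.ofFn_eq_map, List.countP_map]
  rw [Finset.card_filter]
  rw [Fin.sum_univ_def]
  induction (List.finRange N) with
  | nil => simp
  | cons a l ih => simp [List.countP_cons, ih]; omega

lemma orderStat_spec {N : ℕ} {u : Fin N → ℝ} (hu : Function.Injective u) {k : ℕ}
    (hk1 : 1 ≤ k) (hkN : k ≤ N) :
    orderStat u k ∈ Set.range u ∧
      (Finset.univ.filter fun j => u j ≤ orderStat u k).card = k := by
  set s := (List.ofFn u).mergeSort (· ≤ ·) with hs_def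
  have hperm : s.Perm (List.ofFn u) := List.mergeSort_perm _ _
  have hlen : s.length = N := by rw [hperm.length_eq, List.length_ofFn]
  have hsorted : List.Pairwise (· ≤ ·) s := List.pairwise_mergeSort' (· ≤ ·) _
  have hnodup : s.Nodup := hperm.nodup_iff.mpr (List.nodup_ofFn.mpr hu)
  have hstrict : s.Pairwise (· < ·) :=
    (hsorted.and hnodup).imp fun h => lt_of_le_of_ne h.1 h.2
  have hlt : k - 1 < s.length := by omega
  have hq : orderStat u k = s[k-1] := by
    rw [orderStat, ← hs_def, List.getD_eq_getElem _ _ hlt]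
  constructor
  · rw [hq]
    have : s[k-1] ∈ List.ofFn u := hperm.mem_iff.mp (List.getElem_mem hlt)
    exact List.mem_ofFn.mp this
  · rw [hq, card_filter_le_eq_countP, ← hperm.countP_eq,
      count_le_getElem_of_sorted hstrict hlt]
    omega

lemma orderStat_nonneg {N : ℕ} {u : Fin N → ℝ} (hu : ∀ j, 0 ≤ u j) (m : ℕ) :
    0 ≤ orderStat u m := by
  rw [orderStat]
  rcases lt_or_ge (m-1) ((List.ofFn u).mergeSort (· ≤ ·)).length with h | h
  · rw [List.getD_eq_getElem _ _ h]
    have hmem : ((List.ofFn u).mergeSort (· ≤ ·))[m-1] ∈ List.ofFn u :=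
      (List.mergeSort_perm _ _).mem_iff.mp (List.getElem_mem h)
    obtain ⟨j, hj⟩ := List.mem_ofFn.mp hmem
    exact hj ▸ hu j
  · rw [List.getD_eq_default _ _ h]

lemma rk_last_le_iff {N : ℕ} {v : Fin (N+1) → ℝ} (hv : Function.Injective v) {k : ℕ}
    (hk1 : 1 ≤ k) (hkN : k ≤ N) :
    v (Fin.last N) ≤ orderStat (fun n : Fin N => v n.castSucc) k ↔
      rk v (Fin.last N) ≤ k := by
  set u : Fin N → ℝ := fun n => v n.castSucc with hu_def
  have hu : Function.Injective u := fun a b hab => by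
    have := hv hab
    exact Fin.castSucc_injective N this
  obtain ⟨⟨j₀, hj₀⟩, hcard⟩ := orderStat_spec hu hk1 hkN
  set q := orderStat u k
  have hne : v (Fin.last N) ≠ q := by
    rw [← hj₀]
    intro h
    have := hv h
    exact absurd this.symm (Fin.castSucc_lt_last j₀).ne
  have hrk : rk v (Fin.last N)
      = (Finset.univ.filter fun j : Fin N => u j ≤ v (Fin.last N)).card + 1 := by
    rw [rk, Finset.card_filter, Finset.card_filter, Fin.sum_univ_castSucc]
    simp [hu_def]
  constructor
  · intro h
    have hlt : v (Fin.last N) < q := lt_of_le_of_ne h hne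
    have hsub : (Finset.univ.filter fun j : Fin N => u j ≤ v (Fin.last N))
        ⊆ (Finset.univ.filter fun j : Fin N => u j ≤ q).erase j₀ := by
      intro j hj
      simp only [Finset.mem_filter, Finset.mem_erase, Finset.mem_univ, true_and] at hj ⊢
      refine ⟨fun hjj => ?_, hj.trans hlt.le⟩
      subst hjj
      rw [hj₀] at hj
      exact absurd hlt (not_lt.mpr hj)
    have := Finset.card_le_card hsub
    rw [Finset.card_erase_of_mem (by simp [hj₀]), hcard] at this
    omega
  · intro h
    by_contra hq
    push_neg at hq
    have hsub : (Finset.univ.filter fun j : Fin N => u j ≤ q)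
        ⊆ (Finset.univ.filter fun j : Fin N => u j ≤ v (Fin.last N)) := by
      intro j hj
      simp only [Finset.mem_filter, Finset.mem_univ, true_and] at hj ⊢
      exact hj.trans hq.le
    have := Finset.card_le_card hsub
    rw [hcard] at this
    omega

lemma rk_comp_perm {M : ℕ} (v : Fin M → ℝ) (σ : Equiv.Perm (Fin M)) (i : Fin M) :
    rk (v ∘ σ) i = rk v (σ i) := by
  rw [rk, rk]
  apply Finset.card_bij' (fun j _ => σ j) (fun j _ => σ.symm j)
  · intro a ha; simp only [Finset.mem_filter, Finset.mem_univ, true_and] at ha ⊢; exact ha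
  · intro a ha; simp only [Finset.mem_filter, Finset.mem_univ, true_and,
      Function.comp_apply, Equiv.apply_symm_apply] at ha ⊢; exact ha
  · intros; simp
  · intros; simp

lemma joint_map_eq_pi {Ω : Type*} [MeasureSpace Ω] [IsProbabilityMeasure (ℙ : Measure Ω)]
    {M : ℕ} {β : Type*} [MeasurableSpace β] {Z : Fin M → Ω → β}
    (hZ : ∀ i, Measurable (Z i))
    (hindep : ProbabilityTheory.iIndepFun Z ℙ) :
    (ℙ : Measure Ω).map (fun ω i => Z i ω) = Measure.pi (fun i => (ℙ : Measure Ω).map (Z i)) := by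
  haveI : ∀ i, IsProbabilityMeasure ((ℙ : Measure Ω).map (Z i)) :=
    fun i => Measure.isProbabilityMeasure_map (hZ i).aemeasurable
  have hJ : Measurable (fun ω i => Z i ω) := measurable_pi_lambda _ hZ
  refine (Measure.pi_eq fun s hs => ?_).symm
  rw [Measure.map_apply hJ (MeasurableSet.univ_pi hs)]
  have hpre : (fun ω i => Z i ω) ⁻¹' (Set.univ.pi s) = ⋂ i ∈ Finset.univ, Z i ⁻¹' s i := by
    ext ω; simp [Set.mem_pi]
  rw [hpre, (ProbabilityTheory.iIndepFun_iff_measure_inter_preimage_eq_mul.mp hindep)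
      Finset.univ (fun i _ => hs i)]
  refine Finset.prod_congr rfl fun i _ => ?_
  rw [Measure.map_apply (hZ i) (hs i)]

lemma map_perm_eq {Ω : Type*} [MeasureSpace Ω] [IsProbabilityMeasure (ℙ : Measure Ω)]
    {M : ℕ} {β : Type*} [MeasurableSpace β] {Z : Fin M → Ω → β}
    (hZ : ∀ i, Measurable (Z i))
    (hindep : ProbabilityTheory.iIndepFun Z ℙ)
    (hident : ∀ i j, ProbabilityTheory.IdentDistrib (Z i) (Z j) ℙ ℙ)
    (σ : Equiv.Perm (Fin M)) :
    (ℙ : Measure Ω).map (fun ω i => Z (σ i) ω) = (ℙ : Measure Ω).map (fun ω i => Z i ω) := by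
  haveI : ∀ i, IsProbabilityMeasure ((ℙ : Measure Ω).map (Z i)) :=
    fun i => Measure.isProbabilityMeasure_map (hZ i).aemeasurable
  have hJ : Measurable (fun ω i => Z i ω) := measurable_pi_lambda _ hZ
  have hcomp : Measurable (fun v : Fin M → β => v ∘ σ) :=
    measurable_pi_lambda _ (fun i => measurable_pi_apply (σ i))
  have hdecomp : (fun ω i => Z (σ i) ω) = (fun v : Fin M → β => v ∘ σ) ∘ (fun ω i => Z i ω) :=
    rfl
  rw [hdecomp, ← Measure.map_map hcomp hJ, joint_map_eq_pi hZ hindep]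
  have hmp := measurePreserving_piCongrLeft (fun i => (ℙ : Measure Ω).map (Z i)) σ.symm
  have hcoe : ⇑(MeasurableEquiv.piCongrLeft (fun _ : Fin M => β) σ.symm)
      = fun v : Fin M → β => v ∘ σ := by
    funext v
    funext j
    have h := MeasurableEquiv.piCongrLeft_apply_apply σ.symm (β := fun _ : Fin M => β) v (σ j)
    simpa using h
  rw [hcoe] at hmp
  have hpis : (Measure.pi fun i' => (ℙ : Measure Ω).map (Z (σ.symm i')))
      = Measure.pi fun i => (ℙ : Measure Ω).map (Z i) := by
    congr 1
    funext i
    exact (hident (σ.symm i) i).map_eq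
  rw [← hpis, hmp.map_eq, hpis]

lemma measurable_rk_set {M k : ℕ} (i : Fin M) :
    MeasurableSet {v : Fin M → ℝ | rk v i ≤ k} := by
  have hm : Measurable (fun v : Fin M → ℝ => rk v i) := by
    simp only [rk, Finset.card_filter]
    exact Finset.measurable_sum _ (fun j _ => Measurable.ite
      (measurableSet_le (measurable_pi_apply j) (measurable_pi_apply i))
      measurable_const measurable_const)
  exact hm (by trivial : MeasurableSet (Set.Iic k))

/-- Standard (non-adaptive) split conformal prediction for regression.  Let
`(X n, Y n)`, `n = 0, ..., N`, be i.i.d. pairs in `ℝ^d × ℝ` (index `N` playing the role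
of the test pair), `f : ℝ^d → ℝ` a measurable point-prediction function, and
`A n = (f (X n) - Y n)^2` the conformity scores, assumed a.s. pairwise distinct.  For
`α ∈ [1/(N+1), 1]`, let `q̂` be the `⌈(N+1)(1-α)⌉`-th smallest calibration score.  Then
the prediction set `C = {y : (f (X test) - y)^2 ≤ q̂} = [f(X test) - √q̂, f(X test) + √q̂]`
contains `Y test` with probability at least `1 - α`. -/
theorem split_conformal_marginal_validity
    {Ω : Type*} [MeasureSpace Ω] [IsProbabilityMeasure (ℙ : Measure Ω)]
    {d N : ℕ}
    (X : Fin (N + 1) → Ω → (Fin d → ℝ)) (Y : Fin (N + 1) → Ω → ℝ)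
    (hmeas : ∀ n, Measurable (fun ω => (X n ω, Y n ω)))
    (hindep : iIndepFun (fun n ω => (X n ω, Y n ω)) ℙ)
    (hident : ∀ n n', IdentDistrib (fun ω => (X n ω, Y n ω))
      (fun ω => (X n' ω, Y n' ω)) ℙ ℙ)
    (f : (Fin d → ℝ) → ℝ) (hf : Measurable f)
    (A : Fin (N + 1) → Ω → ℝ) (hA : ∀ n ω, A n ω = (f (X n ω) - Y n ω) ^ 2)
    (hdistinct : ∀ᵐ ω ∂(ℙ : Measure Ω), Function.Injective (fun n => A n ω))
    (α : ℝ) (hα : α ∈ Set.Icc (1 / ((N : ℝ) + 1)) 1)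
    (q : Ω → ℝ)
    (hq : ∀ ω, q ω =
      orderStat (fun n : Fin N => A n.castSucc ω) ⌈((N : ℝ) + 1) * (1 - α)⌉₊) :
    (∀ ω, {y : ℝ | (f (X (Fin.last N) ω) - y) ^ 2 ≤ q ω}
        = Set.Icc (f (X (Fin.last N) ω) - Real.sqrt (q ω))
            (f (X (Fin.last N) ω) + Real.sqrt (q ω))) ∧
    ENNReal.ofReal (1 - α) ≤
      ℙ {ω | Y (Fin.last N) ω ∈ {y : ℝ | (f (X (Fin.last N) ω) - y) ^ 2 ≤ q ω}} := by
  have hq0 : ∀ ω, 0 ≤ q ω := by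
    intro ω
    rw [hq ω]
    exact orderStat_nonneg (fun j => (hA j.castSucc ω) ▸ sq_nonneg _) _
  constructor
  · -- part 1
    intro ω
    ext y
    simp only [Set.mem_setOf_eq, Set.mem_Icc]
    set c := f (X (Fin.last N) ω)
    have h1 : (c - y) ^ 2 ≤ q ω ↔ |c - y| ≤ Real.sqrt (q ω) := by
      rw [← Real.sqrt_sq_eq_abs]
      exact (Real.sqrt_le_sqrt_iff (hq0 ω)).symm
    rw [h1, abs_le]
    constructor
    · rintro ⟨ha, hb⟩; constructor <;> linarith
    · rintro ⟨ha, hb⟩; constructor <;> linarith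
  · -- part 2
    by_cases hα1 : 1 ≤ α
    · have : ENNReal.ofReal (1 - α) = 0 := ENNReal.ofReal_eq_zero.mpr (by linarith)
      rw [this]; exact zero_le
    push_neg at hα1
    set k : ℕ := ⌈((N : ℝ) + 1) * (1 - α)⌉₊ with hk_def
    have hNpos : (0:ℝ) < (N:ℝ) + 1 := by positivity
    have hk1 : 1 ≤ k := Nat.ceil_pos.mpr (by nlinarith)
    have hkN : k ≤ N := by
      apply Nat.ceil_le.mpr
      have h1 : 1 ≤ ((N:ℝ) + 1) * α := by
        have := hα.1
        rw [div_le_iff₀ hNpos] at this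
        linarith
      nlinarith
    -- notation
    set Z : Fin (N+1) → Ω → (Fin d → ℝ) × ℝ := fun n ω => (X n ω, Y n ω) with hZ_def
    set g : (Fin d → ℝ) × ℝ → ℝ := fun p => (f p.1 - p.2) ^ 2 with hg_def
    have hg : Measurable g := ((hf.comp measurable_fst).sub measurable_snd).pow_const 2
    have hAg : ∀ n, A n = fun ω => g (Z n ω) := fun n => funext fun ω => hA n ω
    have hAmeas : ∀ n, Measurable (A n) := fun n => (hAg n) ▸ hg.comp (hmeas n)
    set J : Ω → Fin (N+1) → ℝ := fun ω i => A i ω with hJ_def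
    have hJ : Measurable J := measurable_pi_lambda _ hAmeas
    set S : Fin (N+1) → Set (Fin (N+1) → ℝ) := fun i => {v | rk v i ≤ k} with hS_def
    have hS : ∀ i, MeasurableSet (S i) := fun i => measurable_rk_set i
    set G : (Fin (N+1) → (Fin d → ℝ) × ℝ) → (Fin (N+1) → ℝ) := fun z i => g (z i) with hG_def
    have hG : Measurable G := measurable_pi_lambda _ (fun i => hg.comp (measurable_pi_apply i))
    -- law invariance
    have key : ∀ σ : Equiv.Perm (Fin (N+1)),
        (ℙ : Measure Ω).map (fun ω i => A (σ i) ω) = (ℙ : Measure Ω).map J := by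
      intro σ
      have hZperm := map_perm_eq hmeas hindep hident σ
      have e1 : (fun ω i => A (σ i) ω) = G ∘ (fun ω i => Z (σ i) ω) := by
        funext ω; funext i; simp [hG_def, hA (σ i) ω, hZ_def, hg_def]
      have e2 : J = G ∘ (fun ω i => Z i ω) := by
        funext ω; funext i; simp [hG_def, hJ_def, hA i ω, hZ_def, hg_def]
      have hZvec : Measurable (fun ω i => Z i ω) := measurable_pi_lambda _ hmeas
      have hZvecσ : Measurable (fun ω i => Z (σ i) ω) :=
        measurable_pi_lambda _ (fun i => hmeas (σ i))
      rw [e1, e2, ← Measure.map_map hG hZvecσ, ← Measure.map_map hG hZvec, hZperm]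
    -- equal probabilities
    have equalprob : ∀ i, (ℙ : Measure Ω) (J ⁻¹' S i) = (ℙ : Measure Ω) (J ⁻¹' S (Fin.last N)) := by
      intro i
      set σ := Equiv.swap i (Fin.last N) with hσ
      have hpre : J ⁻¹' S i = (fun ω j => A (σ j) ω) ⁻¹' S (Fin.last N) := by
        ext ω
        simp only [Set.mem_preimage, hS_def, Set.mem_setOf_eq]
        have : (fun j => A (σ j) ω) = (J ω) ∘ σ := rfl
        rw [this, rk_comp_perm]
        simp [hσ, Equiv.swap_apply_right]
      have hJσ : Measurable (fun ω j => A (σ j) ω) :=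
        measurable_pi_lambda _ (fun j => hAmeas (σ j))
      rw [hpre, ← Measure.map_apply hJσ (hS (Fin.last N)), key σ,
        Measure.map_apply hJ (hS (Fin.last N))]
    -- sum of probabilities = k
    have hJinj : ∀ᵐ ω ∂(ℙ : Measure Ω), Function.Injective (J ω) := hdistinct
    have hsum : ∑ i : Fin (N+1), (ℙ : Measure Ω) (J ⁻¹' S i) = (k : ℝ≥0∞) := by
      have h1 : ∀ i : Fin (N+1), (ℙ : Measure Ω) (J ⁻¹' S i)
          = ∫⁻ ω, (J ⁻¹' S i).indicator (1 : Ω → ℝ≥0∞) ω ∂(ℙ : Measure Ω) := by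
        intro i
        exact (lintegral_indicator_one (hJ (hS i))).symm
      simp_rw [h1]
      rw [← lintegral_finset_sum _ (fun i _ => measurable_one.indicator (hJ (hS i)))]
      have h2 : ∫⁻ ω, ∑ i : Fin (N+1), (J ⁻¹' S i).indicator (1 : Ω → ℝ≥0∞) ω ∂(ℙ : Measure Ω)
          = ∫⁻ _, (k : ℝ≥0∞) ∂(ℙ : Measure Ω) := by
        apply lintegral_congr_ae
        filter_upwards [hJinj] with ω hω
        have hcnt := rk_count hω (le_trans hkN (Nat.le_succ N))
        have : ∀ i : Fin (N+1), (J ⁻¹' S i).indicator (1 : Ω → ℝ≥0∞) ω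
            = if rk (J ω) i ≤ k then 1 else 0 := by
          intro i
          by_cases h : rk (J ω) i ≤ k <;>
            simp [Set.indicator_apply, hS_def, h]
        simp_rw [this]
        rw [show (∑ i : Fin (N+1), if rk (J ω) i ≤ k then (1:ℝ≥0∞) else 0)
            = ((Finset.univ.filter fun i => rk (J ω) i ≤ k).card : ℝ≥0∞) from by
          rw [Finset.card_filter]; push_cast; rfl, hcnt]
      rw [h2, lintegral_const, measure_univ, mul_one]
    -- (N+1) * P = k
    have hNP : ((N:ℝ≥0∞) + 1) * (ℙ : Measure Ω) (J ⁻¹' S (Fin.last N)) = (k : ℝ≥0∞) := by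
      rw [← hsum, Finset.sum_congr rfl (fun i _ => equalprob i), Finset.sum_const,
        Finset.card_univ, Fintype.card_fin, nsmul_eq_mul]
      push_cast
      ring
    -- target event equals E last a.e.
    have hTeq : {ω | Y (Fin.last N) ω ∈ {y : ℝ | (f (X (Fin.last N) ω) - y) ^ 2 ≤ q ω}}
        =ᵐ[(ℙ : Measure Ω)] (J ⁻¹' S (Fin.last N)) := by
      rw [Filter.eventuallyEq_set]
      filter_upwards [hJinj] with ω hω
      simp only [Set.mem_setOf_eq, Set.mem_preimage, hS_def]
      rw [← hA (Fin.last N) ω]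
      have hqω : q ω = orderStat (fun n : Fin N => (J ω) n.castSucc) k := hq ω
      rw [show A (Fin.last N) ω = (J ω) (Fin.last N) from rfl, hqω]
      exact rk_last_le_iff hω hk1 hkN
    rw [measure_congr hTeq]
    -- final inequality
    have hc0 : ((N:ℝ≥0∞) + 1) ≠ 0 := by simp
    have hct : ((N:ℝ≥0∞) + 1) ≠ ⊤ := by simp [ENNReal.natCast_ne_top]
    rw [← ENNReal.mul_le_mul_iff_left hc0 hct]
    calc ENNReal.ofReal (1 - α) * ((N:ℝ≥0∞) + 1)
        = ENNReal.ofReal ((1 - α) * ((N:ℝ) + 1)) := by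
          rw [ENNReal.ofReal_mul (by linarith)]
          congr 1
          rw [ENNReal.ofReal_add (by positivity) zero_le_one, ENNReal.ofReal_natCast,
            ENNReal.ofReal_one]
      _ ≤ (k : ℝ≥0∞) := by
          rw [← ENNReal.ofReal_natCast k]
          apply ENNReal.ofReal_le_ofReal
          have := Nat.le_ceil (((N:ℝ) + 1) * (1 - α))
          rw [← hk_def] at this
          linarith
      _ = (ℙ : Measure Ω) (J ⁻¹' S (Fin.last N)) * ((N:ℝ≥0∞) + 1) := by
          rw [← hNP, mul_comm]
end

section
/- Let b_1,...,b_N be pairwise distinct real numbers, let b_{(m)} denote the m-th smallest among them, and let h : ℝ → ℝ be any function. Then ∫_{1/(N+1)}^{1} h( b_{(⌈(N+1)(1−α)⌉)} ) dα = (1/(N+1)) · Σ_{n=1}^{N} h(b_n). In particular, the average over all confidence levels of a function of the empirical quantile of the scores equals a sum over the unsorted scores, so evaluating it requires no sorting. -/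
open MeasureTheory

lemma sum_range_getD (l : List ℝ) (h : ℝ → ℝ) :
    ∑ i ∈ Finset.range l.length, h (l.getD i 0) = (l.map h).sum := by
  induction l with
  | nil => simp
  | cons a t ih =>
    rw [List.length_cons, Finset.sum_range_succ']
    simp only [show ∀ k, (a :: t).getD (k + 1) 0 = t.getD k 0 from fun k => rfl,
      show (a :: t).getD 0 0 = a from rfl, List.map_cons, List.sum_cons, ih]
    ring

lemma sum_orderStat {N : ℕ} (b : Fin N → ℝ) (h : ℝ → ℝ) :
    ∑ i ∈ Finset.range N, h (orderStat b (i + 1)) = ∑ n : Fin N, h (b n) := by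
  have hlen : ((List.ofFn b).mergeSort (· ≤ ·)).length = N := by
    rw [List.length_mergeSort, List.length_ofFn]
  have h1 : ∑ i ∈ Finset.range N, h (orderStat b (i + 1))
      = (((List.ofFn b).mergeSort (· ≤ ·)).map h).sum := by
    rw [← sum_range_getD]
    rw [hlen]
    simp [orderStat]
  rw [h1, ((List.mergeSort_perm (List.ofFn b) _).map h).sum_eq]
  rw [show List.map h (List.ofFn b) = List.ofFn (fun n => h (b n)) from by
    rw [List.map_ofFn]; rfl, List.sum_ofFn]

/-- For pairwise distinct scores `b 0, ..., b (N-1)`, averaging over all confidence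
levels `α ∈ [1/(N+1), 1]` a function of the empirical quantile (the
`⌈(N+1)(1-α)⌉`-th smallest score) equals the average of the function over the unsorted
scores: no sorting is needed. -/
theorem integral_quantile_eq_average
    {N : ℕ} (b : Fin N → ℝ) (hb : Function.Injective b) (h : ℝ → ℝ) :
    ∫ α in Set.Icc (1 / ((N : ℝ) + 1)) 1,
        h (orderStat b ⌈((N : ℝ) + 1) * (1 - α)⌉₊)
      = (1 / ((N : ℝ) + 1)) * ∑ n : Fin N, h (b n) := by
  have hN : (0:ℝ) < (N:ℝ) + 1 := by positivity
  set f : ℝ → ℝ := fun α => h (orderStat b ⌈((N : ℝ) + 1) * (1 - α)⌉₊) with hf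
  set c : ℕ → ℝ := fun i => 1 - (i:ℝ) / ((N:ℝ) + 1) with hc
  have hc0 : c 0 = 1 := by simp [hc]
  have hcN : c N = 1 / ((N:ℝ) + 1) := by
    simp only [hc]; field_simp; ring
  have hmono : ∀ i : ℕ, c (i+1) ≤ c i := by
    intro i
    simp only [hc]
    gcongr
    · push_cast; linarith
  have hgap : ∀ i : ℕ, c i - c (i+1) = 1 / ((N:ℝ)+1) := by
    intro i
    simp only [hc]
    push_cast
    field_simp
    ring
  have hceil : ∀ i : ℕ, i < N → ∀ α ∈ Set.Ioo (c (i+1)) (c i),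
      ⌈((N:ℝ)+1) * (1-α)⌉₊ = i + 1 := by
    intro i hi α hα
    obtain ⟨h1, h2⟩ := hα
    simp only [hc] at h1 h2
    rw [Nat.ceil_eq_iff (Nat.succ_ne_zero i)]
    have e1 : ((i:ℝ)) / ((N:ℝ)+1) < 1 - α := by push_cast at h2 ⊢; linarith
    have e2 : 1 - α < ((i:ℝ)+1) / ((N:ℝ)+1) := by push_cast at h1 ⊢; linarith
    have e1' := (div_lt_iff₀ hN).mp e1
    have e2' := (lt_div_iff₀ hN).mp e2
    constructor
    · push_cast; simpa [mul_comm] using e1'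
    · push_cast; nlinarith [e2']
  have hae : ∀ i : ℕ, i < N → ∀ᵐ α ∂(volume : Measure ℝ),
      α ∈ Set.uIoc (c (i+1)) (c i) → f α = h (orderStat b (i+1)) := by
    intro i hi
    have hne : ∀ᵐ α : ℝ ∂volume, α ≠ c i := by
      refine (MeasureTheory.measure_eq_zero_iff_ae_notMem.mp (measure_singleton (c i))).mono ?_
      intro α hα; simpa using hα
    filter_upwards [hne] with α hα hmem
    rw [Set.uIoc_of_le (hmono i)] at hmem
    have hoo : α ∈ Set.Ioo (c (i+1)) (c i) := ⟨hmem.1, lt_of_le_of_ne hmem.2 hα⟩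
    simp only [hf]
    rw [hceil i hi α hoo]
  have hint : ∀ i : ℕ, i < N → IntervalIntegrable f volume (c i) (c (i+1)) := by
    intro i hi
    rw [intervalIntegrable_iff]
    have hconst : IntegrableOn (fun _ : ℝ => h (orderStat b (i+1)))
        (Set.uIoc (c i) (c (i+1))) volume := by
      refine integrableOn_const ?_
      rw [Set.uIoc_comm, Set.uIoc_of_le (hmono i)]
      exact measure_Ioc_lt_top.ne
    refine hconst.congr ?_
    rw [Set.uIoc_comm]
    refine ((ae_restrict_iff' measurableSet_uIoc).mpr ?_)
    filter_upwards [hae i hi] with α hα hmem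
    exact (hα hmem).symm
  have hpiece : ∀ i : ℕ, i < N →
      ∫ α in (c (i+1))..(c i), f α = (1/((N:ℝ)+1)) * h (orderStat b (i+1)) := by
    intro i hi
    rw [intervalIntegral.integral_congr_ae (hae i hi), intervalIntegral.integral_const,
      smul_eq_mul]
    rw [show c i - c (i+1) = 1/((N:ℝ)+1) from hgap i]
  have hsum := intervalIntegral.sum_integral_adjacent_intervals (a := c) (n := N)
    (f := f) (μ := volume) hint
  have hle : 1 / ((N:ℝ) + 1) ≤ 1 := by
    rw [div_le_one hN]; linarith
  have hLHS : (∫ α in Set.Icc (1 / ((N : ℝ) + 1)) 1, f α)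
      = ∫ α in (c N)..(c 0), f α := by
    rw [hc0, hcN, MeasureTheory.integral_Icc_eq_integral_Ioc,
      ← intervalIntegral.integral_of_le hle]
  calc (∫ α in Set.Icc (1 / ((N : ℝ) + 1)) 1, f α)
      = ∫ α in (c N)..(c 0), f α := hLHS
    _ = -∫ α in (c 0)..(c N), f α := by rw [intervalIntegral.integral_symm]
    _ = -∑ k ∈ Finset.range N, ∫ α in (c k)..(c (k+1)), f α := by rw [hsum]
    _ = ∑ k ∈ Finset.range N, (1/((N:ℝ)+1)) * h (orderStat b (k+1)) := by
        rw [← Finset.sum_neg_distrib]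
        refine Finset.sum_congr rfl fun k hk => ?_
        rw [intervalIntegral.integral_symm, hpiece k (Finset.mem_range.mp hk), neg_neg]
    _ = (1/((N:ℝ)+1)) * ∑ k ∈ Finset.range N, h (orderStat b (k+1)) := by
        rw [Finset.mul_sum]
    _ = (1 / ((N : ℝ) + 1)) * ∑ n : Fin N, h (b n) := by rw [sum_orderStat b h]
end
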